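/- Let n ≥ 3, b ∈ ℝ with D := b + (n−2)²/4 ≥ 0, γ := √D − n/2 + 1, and Ω := ℝⁿ ∖ {0}. Let p^H_t(x,y) be a nonnegative kernel satisfying the two-sided Hardy bound in the context with constants C, β₁ ≥ β₂. Then there exist functions ξ₁, ξ₂ : Ω×(0,∞) → (1,∞), with ξ₁(·,r) and ξ₂(·,r) locally bounded in Ω for each r > 0, and a constant α > 0, such that for every R > 0, every measurable f ≥ 0, and every x ∈ Ω, sup_{0<t<R} ∫_{ℝⁿ} p^H_t(x,y) f(y) dy ≤ ξ₁(x,R) M^H_{√(αR)} f(x) + ξ₂(x,R) ∫_{ℝⁿ} p^H_{γ̂R}(x,y) f(y) dy, where γ̂ = β₁/β₂ and M^H_r f(x) = sup_{0<s<r} |B(x,s)|⁻¹ ∫_{B(x,s)} (min(|y|,1))^γ f(y) dy. -/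

import Mathlib

open MeasureTheory Metric ENNReal

/-- The weighted local maximal function
`M^H_r f(x) = sup_{0<s<r} |B(x,s)|⁻¹ ∫_{B(x,s)} (min(|y|,1))^γ f(y) dy`. -/
noncomputable def hardyMax (n : ℕ) (γ r : ℝ)
    (f : EuclideanSpace ℝ (Fin n) → ℝ) (x : EuclideanSpace ℝ (Fin n)) : ℝ≥0∞ :=
  ⨆ (s : ℝ) (_ : s ∈ Set.Ioo 0 r),
    (volume (ball x s))⁻¹ *
      ∫⁻ y in ball x s, ENNReal.ofReal ((min ‖y‖ 1) ^ γ * f y) ∂volume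

namespace Stmt12Aux

lemma measurable_rpow_const (q : ℝ) : Measurable fun x : ℝ => x ^ q :=
  measurable_of_continuousOn_compl_singleton 0 fun x hx =>
    (Real.continuousAt_rpow_const x q (Or.inl hx)).continuousWithinAt

noncomputable def aux1 (γ a r : ℝ) : ℝ :=
  (min (a / 2) 1) ^ (-|γ|) * (min (a / Real.sqrt r) 1) ^ (-|γ|) *
    (min (a / (2 * Real.sqrt r)) 1) ^ (-|γ|)

lemma aux1_nonneg (γ r : ℝ) {a : ℝ} (ha : 0 ≤ a) : 0 ≤ aux1 γ a r := by
  have h1 : (0:ℝ) ≤ min (a / 2) 1 := le_min (by positivity) zero_le_one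
  have h2 : (0:ℝ) ≤ min (a / Real.sqrt r) 1 :=
    le_min (div_nonneg ha (Real.sqrt_nonneg r)) zero_le_one
  have h3 : (0:ℝ) ≤ min (a / (2 * Real.sqrt r)) 1 :=
    le_min (div_nonneg ha (by positivity)) zero_le_one
  exact mul_nonneg (mul_nonneg (Real.rpow_nonneg h1 _) (Real.rpow_nonneg h2 _))
    (Real.rpow_nonneg h3 _)

lemma aux1_anti (γ r : ℝ) {a a' : ℝ} (h0 : 0 < a') (h : a' ≤ a) (hr : 0 < r) :
    aux1 γ a r ≤ aux1 γ a' r := by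
  have hsr : 0 < Real.sqrt r := Real.sqrt_pos.mpr hr
  have ha : (0:ℝ) ≤ a := h0.le.trans h
  have key : ∀ c : ℝ, 0 < c → (min (a / c) 1) ^ (-|γ|) ≤ (min (a' / c) 1) ^ (-|γ|) := by
    intro c hc
    refine Real.rpow_le_rpow_of_nonpos (lt_min (by positivity) one_pos)
      (min_le_min (by gcongr) le_rfl) (neg_nonpos.mpr (abs_nonneg γ))
  have n1 : ∀ c : ℝ, 0 < c → (0:ℝ) ≤ (min (a / c) 1) ^ (-|γ|) := fun c hc =>
    Real.rpow_nonneg (le_min (div_nonneg ha hc.le) zero_le_one) _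
  have n2 : ∀ c : ℝ, 0 < c → (0:ℝ) ≤ (min (a' / c) 1) ^ (-|γ|) := fun c hc =>
    Real.rpow_nonneg (le_min (by positivity) zero_le_one) _
  unfold aux1
  exact mul_le_mul (mul_le_mul (key 2 two_pos) (key _ hsr) (n1 _ hsr) (n2 2 two_pos))
    (key _ (by positivity)) (n1 _ (by positivity)) (mul_nonneg (n2 2 two_pos) (n2 _ hsr))

noncomputable def auxEps (β₁ a r : ℝ) : ℝ := (min (Real.sqrt r) a / 2) ^ 2 / (β₁ * r)

lemma auxEps_pos {β₁ a r : ℝ} (hβ : 0 < β₁) (ha : 0 < a) (hr : 0 < r) :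
    0 < auxEps β₁ a r := by
  have h : 0 < min (Real.sqrt r) a := lt_min (Real.sqrt_pos.mpr hr) ha
  unfold auxEps; positivity

noncomputable def aux2 (C β₁ β₂ : ℝ) (m : ℕ) (a r : ℝ) : ℝ :=
  C ^ 2 * (β₁ / β₂) ^ m * Real.exp (1 / (4 * β₁)) * (m.factorial : ℝ) *
    (max (auxEps β₁ a r)⁻¹ 0) ^ m

lemma aux2_nonneg (C β₁ β₂ : ℝ) (m : ℕ) (a r : ℝ) (hβ₁ : 0 < β₁) (hβ₂ : 0 < β₂) :
    0 ≤ aux2 C β₁ β₂ m a r := by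
  unfold aux2
  have h : (0:ℝ) ≤ max (auxEps β₁ a r)⁻¹ 0 := le_max_right _ _
  positivity

lemma aux2_anti (C : ℝ) {β₁ β₂ : ℝ} (hβ₁ : 0 < β₁) (hβ₂ : 0 < β₂) (m : ℕ) {a a' r : ℝ}
    (h0 : 0 < a') (h : a' ≤ a) (hr : 0 < r) : aux2 C β₁ β₂ m a r ≤ aux2 C β₁ β₂ m a' r := by
  have h1 : auxEps β₁ a' r ≤ auxEps β₁ a r := by
    unfold auxEps
    have hm : min (Real.sqrt r) a' ≤ min (Real.sqrt r) a := min_le_min le_rfl h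
    have hm0 : 0 ≤ min (Real.sqrt r) a' / 2 :=
      div_nonneg (le_min (Real.sqrt_nonneg r) h0.le) two_pos.le
    gcongr
  have h2 : (auxEps β₁ a r)⁻¹ ≤ (auxEps β₁ a' r)⁻¹ :=
    inv_anti₀ (auxEps_pos hβ₁ h0 hr) h1
  unfold aux2
  have hpre : (0:ℝ) ≤ C ^ 2 * (β₁ / β₂) ^ m * Real.exp (1 / (4 * β₁)) * (m.factorial : ℝ) := by
    positivity
  refine mul_le_mul_of_nonneg_left ?_ hpre
  exact pow_le_pow_left₀ (le_max_right _ _) (max_le_max h2 le_rfl) m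

lemma exp_term_bound (n : ℕ) {β₁ : ℝ} (hβ : 0 < β₁) (j : ℕ) :
    Real.exp (-(4 ^ j / β₁)) * 2 ^ ((j + 1) * n) ≤
      (((n + 1).factorial : ℝ) * (max β₁ 1) ^ (n + 1) * 2 ^ (n + 1)) * (1 / 2) ^ (j + 1) := by
  set B : ℝ := ((n + 1).factorial : ℝ) * (max β₁ 1) ^ (n + 1) * 2 ^ (n + 1) with hB
  have hu : (0:ℝ) ≤ 4 ^ j / β₁ := by positivity
  have key : (2:ℝ) ^ ((j + 1) * n) * 2 ^ (j + 1) ≤ B * Real.exp (4 ^ j / β₁) := by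
    have h1 : ((4:ℝ) ^ j / β₁) ^ (n + 1) ≤ ((n + 1).factorial : ℝ) * Real.exp (4 ^ j / β₁) := by
      have := Real.pow_div_factorial_le_exp _ hu (n + 1)
      have hf : (0:ℝ) < ((n + 1).factorial : ℝ) := by positivity
      rw [div_le_iff₀ hf] at this
      linarith [this]
    have h2 : ((4:ℝ) ^ j) ^ (n + 1) ≤ (max β₁ 1) ^ (n + 1) * ((4:ℝ) ^ j / β₁) ^ (n + 1) := by
      rw [← mul_pow]
      refine pow_le_pow_left₀ (by positivity) ?_ _
      rw [mul_div_assoc']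
      rw [le_div_iff₀ hβ]
      have : β₁ ≤ max β₁ 1 := le_max_left _ _
      nlinarith [pow_pos (show (0:ℝ) < 4 by norm_num) j]
    calc (2:ℝ) ^ ((j + 1) * n) * 2 ^ (j + 1)
        = 2 ^ ((j + 1) * (n + 1)) := by rw [← pow_add]; congr 1
      _ ≤ 2 ^ ((2 * j + 1) * (n + 1)) := by
          apply pow_le_pow_right₀ one_le_two
          have : j + 1 ≤ 2 * j + 1 := by omega
          exact Nat.mul_le_mul_right _ this
      _ = 2 ^ (n + 1) * ((4:ℝ) ^ j) ^ (n + 1) := by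
          have h4 : ((4:ℝ) ^ j) ^ (n + 1) = 2 ^ (2 * (j * (n + 1))) := by
            rw [show (4:ℝ) = 2 ^ 2 by norm_num, ← pow_mul, ← pow_mul, ← mul_assoc]
          rw [h4, ← pow_add]
          congr 1
          ring
      _ ≤ 2 ^ (n + 1) * ((max β₁ 1) ^ (n + 1) * ((4:ℝ) ^ j / β₁) ^ (n + 1)) := by
          refine mul_le_mul_of_nonneg_left h2 (by positivity)
      _ ≤ 2 ^ (n + 1) * ((max β₁ 1) ^ (n + 1) * (((n + 1).factorial : ℝ) *
            Real.exp (4 ^ j / β₁))) := by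
          refine mul_le_mul_of_nonneg_left (mul_le_mul_of_nonneg_left h1 (by positivity))
            (by positivity)
      _ = B * Real.exp (4 ^ j / β₁) := by rw [hB]; ring
  have hexp : (0:ℝ) < Real.exp (4 ^ j / β₁) := Real.exp_pos _
  have h2p : (0:ℝ) < (2:ℝ) ^ (j + 1) := by positivity
  rw [Real.exp_neg, one_div, inv_pow, mul_comm, ← div_eq_mul_inv, div_le_iff₀ hexp]
  calc (2:ℝ) ^ ((j + 1) * n) = 2 ^ ((j + 1) * n) * 2 ^ (j + 1) / 2 ^ (j + 1) := by
        field_simp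
    _ ≤ B * Real.exp (4 ^ j / β₁) / 2 ^ (j + 1) := by gcongr
    _ = B * ((2:ℝ) ^ (j + 1))⁻¹ * Real.exp (4 ^ j / β₁) := by ring

lemma minScale {a t s : ℝ} (ht : 0 < t) (hts : t ≤ s) (ha : 0 ≤ a) :
    min (a / Real.sqrt t) 1 ≤ Real.sqrt (s / t) * min (a / Real.sqrt s) 1 := by
  have hs : 0 < s := lt_of_lt_of_le ht hts
  have hst : 0 < Real.sqrt t := Real.sqrt_pos.mpr ht
  have hss : 0 < Real.sqrt s := Real.sqrt_pos.mpr hs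
  have hc1 : (1:ℝ) ≤ Real.sqrt (s / t) := by
    rw [show (1:ℝ) = Real.sqrt 1 by simp]
    exact Real.sqrt_le_sqrt ((le_div_iff₀ ht).mpr (by linarith))
  have hkey : a / Real.sqrt t = Real.sqrt (s / t) * (a / Real.sqrt s) := by
    rw [Real.sqrt_div' s ht.le]
    field_simp
  rw [hkey]
  rcases le_total (a / Real.sqrt s) 1 with hle | hle
  · rw [min_eq_left hle]
    exact min_le_left _ _
  · rw [min_eq_right hle, mul_one]
    exact (min_le_right _ _).trans hc1


lemma min_div_sqrt_anti {a t s : ℝ} (ht : 0 < t) (hts : t ≤ s) (ha : 0 ≤ a) :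
    min (a / Real.sqrt s) 1 ≤ min (a / Real.sqrt t) 1 := by
  have hst : 0 < Real.sqrt t := Real.sqrt_pos.mpr ht
  refine min_le_min ?_ le_rfl
  gcongr

set_option maxHeartbeats 1000000 in
lemma kernel_compare {C β₁ β₂ t R ρ γ : ℝ} {n m : ℕ}
    (hC : 1 ≤ C) (hβ₂ : 0 < β₂) (hβ : β₂ ≤ β₁) (ht0 : 0 < t) (htR : t < R)
    (hρ0 : 0 < ρ) (hρR : ρ ^ 2 ≤ R / 4) (hm : (n : ℝ) / 2 + |γ| ≤ m)
    {ax ay d : ℝ} (hax : 0 < ax) (hay : 0 < ay) (hd : ρ ≤ d) :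
    C * t ^ (-(n : ℝ) / 2) * (min (ax / Real.sqrt t) 1 * min (ay / Real.sqrt t) 1) ^ γ *
        Real.exp (-(d ^ 2 / (β₁ * t)))
      ≤ (C ^ 2 * (β₁ / β₂) ^ m * Real.exp (1 / (4 * β₁)) * (m.factorial : ℝ) *
          (max (ρ ^ 2 / (β₁ * R))⁻¹ 0) ^ m) *
        (C⁻¹ * ((β₁ / β₂) * R) ^ (-(n : ℝ) / 2) *
          (min (ax / Real.sqrt ((β₁ / β₂) * R)) 1 * min (ay / Real.sqrt ((β₁ / β₂) * R)) 1) ^ γ *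
          Real.exp (-(d ^ 2 / (β₂ * ((β₁ / β₂) * R))))) := by
  have hβ₁ : 0 < β₁ := lt_of_lt_of_le hβ₂ hβ
  have hR0 : 0 < R := ht0.trans htR
  have hgam : 1 ≤ β₁ / β₂ := (one_le_div hβ₂).mpr hβ
  simp only [neg_div]
  set T : ℝ := (β₁ / β₂) * R with hT
  have hT0 : 0 < T := by positivity
  have hRT : R ≤ T := le_mul_of_one_le_left hR0.le hgam
  have htT : t ≤ T := (htR.le).trans hRT
  have hu1 : 1 ≤ T / t := (one_le_div ht0).mpr htT
  have hβ₂T : β₂ * T = β₁ * R := by rw [hT]; field_simp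
  set a : ℝ := (n : ℝ) / 2 with ha
  have ha0 : 0 ≤ a := by positivity
  -- abbreviations
  set mtx := min (ax / Real.sqrt t) 1 with hmtx
  set mty := min (ay / Real.sqrt t) 1 with hmty
  set mTx := min (ax / Real.sqrt T) 1 with hmTx
  set mTy := min (ay / Real.sqrt T) 1 with hmTy
  have hmtx0 : 0 < mtx := lt_min (by positivity) one_pos
  have hmty0 : 0 < mty := lt_min (by positivity) one_pos
  have hmTx0 : 0 < mTx := lt_min (by positivity) one_pos
  have hmTy0 : 0 < mTy := lt_min (by positivity) one_pos
  -- P1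
  have hTa : (0:ℝ) < T ^ a := Real.rpow_pos_of_pos hT0 _
  have hta : (0:ℝ) < t ^ a := Real.rpow_pos_of_pos ht0 _
  have P1 : t ^ (-a) = (T / t) ^ a * T ^ (-a) := by
    rw [Real.div_rpow hT0.le ht0.le, Real.rpow_neg hT0.le, Real.rpow_neg ht0.le]
    field_simp
  -- P2
  have P2 : (mtx * mty) ^ γ ≤ (T / t) ^ |γ| * (mTx * mTy) ^ γ := by
    have hsx : mtx ≤ Real.sqrt (T / t) * mTx := minScale ht0 htT hax.le
    have hsy : mty ≤ Real.sqrt (T / t) * mTy := minScale ht0 htT hay.le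
    have hmx : mTx ≤ mtx := min_div_sqrt_anti ht0 htT hax.le
    have hmy : mTy ≤ mty := min_div_sqrt_anti ht0 htT hay.le
    have hTt0 : (0:ℝ) ≤ T / t := by positivity
    rcases le_or_gt 0 γ with hγ0 | hγ0
    · have h1 : mtx * mty ≤ (T / t) * (mTx * mTy) := by
        calc mtx * mty ≤ (Real.sqrt (T / t) * mTx) * (Real.sqrt (T / t) * mTy) :=
              mul_le_mul hsx hsy hmty0.le (by positivity)
          _ = (Real.sqrt (T / t) * Real.sqrt (T / t)) * (mTx * mTy) := by ring
          _ = (T / t) * (mTx * mTy) := by rw [Real.mul_self_sqrt hTt0]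
      calc (mtx * mty) ^ γ ≤ ((T / t) * (mTx * mTy)) ^ γ :=
            Real.rpow_le_rpow (by positivity) h1 hγ0
        _ = (T / t) ^ γ * (mTx * mTy) ^ γ := Real.mul_rpow hTt0 (by positivity)
        _ = (T / t) ^ |γ| * (mTx * mTy) ^ γ := by rw [abs_of_nonneg hγ0]
    · have h1 : mTx * mTy ≤ mtx * mty := mul_le_mul hmx hmy hmTy0.le hmtx0.le
      have h2 : (mtx * mty) ^ γ ≤ (mTx * mTy) ^ γ :=
        Real.rpow_le_rpow_of_nonpos (by positivity) h1 hγ0.le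
      have h3 : (1:ℝ) ≤ (T / t) ^ |γ| := by
        calc (1:ℝ) = (T / t) ^ (0:ℝ) := (Real.rpow_zero _).symm
          _ ≤ (T / t) ^ |γ| := Real.rpow_le_rpow_of_exponent_le hu1 (abs_nonneg γ)
      calc (mtx * mty) ^ γ ≤ (mTx * mTy) ^ γ := h2
        _ = 1 * (mTx * mTy) ^ γ := (one_mul _).symm
        _ ≤ (T / t) ^ |γ| * (mTx * mTy) ^ γ :=
            mul_le_mul_of_nonneg_right h3 (Real.rpow_nonneg (by positivity) _)
  -- P3
  have P3 : Real.exp (-(d ^ 2 / (β₁ * t))) ≤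
      Real.exp (1 / (4 * β₁)) * Real.exp (-(ρ ^ 2 / (β₁ * t))) * Real.exp (-(d ^ 2 / (β₁ * R))) := by
    rw [← Real.exp_add, ← Real.exp_add, Real.exp_le_exp]
    have hd2 : ρ ^ 2 ≤ d ^ 2 := by nlinarith
    have hinv : 1 / (β₁ * R) ≤ 1 / (β₁ * t) := by
      apply one_div_le_one_div_of_le (by positivity)
      exact mul_le_mul_of_nonneg_left htR.le hβ₁.le
    have hq : ρ ^ 2 / (β₁ * R) ≤ 1 / (4 * β₁) := by
      rw [div_le_div_iff₀ (by positivity) (by positivity)]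
      have h5 := mul_le_mul_of_nonneg_right hρR hβ₁.le
      linarith
    have key : (d ^ 2 - ρ ^ 2) * (1 / (β₁ * t) - 1 / (β₁ * R)) ≥ 0 :=
      mul_nonneg (by linarith) (by linarith)
    have e1 : d ^ 2 / (β₁ * t) = d ^ 2 * (1 / (β₁ * t)) := by ring
    have e2 : d ^ 2 / (β₁ * R) = d ^ 2 * (1 / (β₁ * R)) := by ring
    have e3 : ρ ^ 2 / (β₁ * t) = ρ ^ 2 * (1 / (β₁ * t)) := by ring
    have e4 : ρ ^ 2 / (β₁ * R) = ρ ^ 2 * (1 / (β₁ * R)) := by ring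
    have : -(d ^ 2 / (β₁ * t)) ≤ ρ ^ 2 / (β₁ * R) + -(ρ ^ 2 / (β₁ * t)) + -(d ^ 2 / (β₁ * R)) := by
      rw [e1, e2, e3, e4]; nlinarith [key]
    linarith [this, hq]
  -- P4-P7 : the constant bound
  have hC0 : (0:ℝ) < C := lt_of_lt_of_le one_pos hC
  set w : ℝ := ρ ^ 2 / (β₁ * t) with hw
  have hw0 : 0 < w := by positivity
  have P4 : (T / t) ^ (a + |γ|) ≤ ((T / t) ^ m : ℝ) := by
    calc (T / t) ^ (a + |γ|) ≤ (T / t) ^ (m : ℝ) :=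
          Real.rpow_le_rpow_of_exponent_le hu1 (by rw [ha] at *; exact hm)
      _ = (T / t) ^ m := Real.rpow_natCast _ m
  have P5 : ((T / t) ^ m : ℝ) = (β₁ / β₂) ^ m * (R / t) ^ m := by
    rw [← mul_pow]
    congr 1
    rw [hT]; field_simp
  have P6 : (R / t) ^ m * Real.exp (-w) ≤ (m.factorial : ℝ) * (β₁ * R / ρ ^ 2) ^ m := by
    have hfm : (0:ℝ) < (m.factorial : ℝ) := by positivity
    have hwm : (0:ℝ) < w ^ m / (m.factorial : ℝ) := by positivity
    have he : Real.exp (-w) ≤ (m.factorial : ℝ) / w ^ m := by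
      rw [Real.exp_neg]
      have h1 : w ^ m / (m.factorial : ℝ) ≤ Real.exp w :=
        Real.pow_div_factorial_le_exp _ hw0.le m
      calc (Real.exp w)⁻¹ ≤ (w ^ m / (m.factorial : ℝ))⁻¹ :=
            inv_anti₀ hwm h1
        _ = (m.factorial : ℝ) / w ^ m := by rw [inv_div]
    calc (R / t) ^ m * Real.exp (-w) ≤ (R / t) ^ m * ((m.factorial : ℝ) / w ^ m) :=
          mul_le_mul_of_nonneg_left he (by positivity)
      _ = (m.factorial : ℝ) * ((R / t) / w) ^ m := by
          rw [div_pow (R / t) w m]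
          ring
      _ = (m.factorial : ℝ) * (β₁ * R / ρ ^ 2) ^ m := by
          congr 2
          rw [hw]
          field_simp
  have P7 : (β₁ * R / ρ ^ 2) ^ m ≤ (max (ρ ^ 2 / (β₁ * R))⁻¹ 0) ^ m := by
    apply pow_le_pow_left₀ (by positivity)
    rw [inv_div]
    exact le_max_left _ _
  -- assemble
  have hWT : (0:ℝ) ≤ (mTx * mTy) ^ γ := Real.rpow_nonneg (by positivity) _
  have hET : (0:ℝ) < Real.exp (-(d ^ 2 / (β₁ * R))) := Real.exp_pos _
  have hβ₂Trw : Real.exp (-(d ^ 2 / (β₂ * T))) = Real.exp (-(d ^ 2 / (β₁ * R))) := by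
    rw [hβ₂T]
  calc C * t ^ (-a) * (mtx * mty) ^ γ * Real.exp (-(d ^ 2 / (β₁ * t)))
      = C * ((T / t) ^ a * T ^ (-a)) * (mtx * mty) ^ γ * Real.exp (-(d ^ 2 / (β₁ * t))) := by
        rw [← P1]
    _ ≤ C * ((T / t) ^ a * T ^ (-a)) * ((T / t) ^ |γ| * (mTx * mTy) ^ γ) *
          (Real.exp (1 / (4 * β₁)) * Real.exp (-w) * Real.exp (-(d ^ 2 / (β₁ * R)))) := by
        have hpos : (0:ℝ) ≤ C * ((T / t) ^ a * T ^ (-a)) := by positivity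
        apply mul_le_mul
        · exact mul_le_mul_of_nonneg_left P2 hpos
        · exact P3
        · positivity
        · positivity
    _ = (C ^ 2 * ((T / t) ^ a * (T / t) ^ |γ|) * Real.exp (1 / (4 * β₁)) * Real.exp (-w)) *
          (C⁻¹ * T ^ (-a) * (mTx * mTy) ^ γ * Real.exp (-(d ^ 2 / (β₁ * R)))) := by
        field_simp
    _ = (C ^ 2 * (T / t) ^ (a + |γ|) * Real.exp (1 / (4 * β₁)) * Real.exp (-w)) *
          (C⁻¹ * T ^ (-a) * (mTx * mTy) ^ γ * Real.exp (-(d ^ 2 / (β₁ * R)))) := by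
        rw [Real.rpow_add (by positivity)]
    _ ≤ (C ^ 2 * (β₁ / β₂) ^ m * Real.exp (1 / (4 * β₁)) * (m.factorial : ℝ) *
          (max (ρ ^ 2 / (β₁ * R))⁻¹ 0) ^ m) *
          (C⁻¹ * T ^ (-a) * (mTx * mTy) ^ γ * Real.exp (-(d ^ 2 / (β₁ * R)))) := by
        apply mul_le_mul_of_nonneg_right _ (by positivity)
        calc C ^ 2 * (T / t) ^ (a + |γ|) * Real.exp (1 / (4 * β₁)) * Real.exp (-w)
            ≤ C ^ 2 * ((β₁ / β₂) ^ m * (R / t) ^ m) * Real.exp (1 / (4 * β₁)) *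
              Real.exp (-w) := by
              rw [← P5]
              have := P4
              gcongr
          _ = (C ^ 2 * (β₁ / β₂) ^ m * Real.exp (1 / (4 * β₁))) *
                ((R / t) ^ m * Real.exp (-w)) := by ring
          _ ≤ (C ^ 2 * (β₁ / β₂) ^ m * Real.exp (1 / (4 * β₁))) *
                ((m.factorial : ℝ) * (β₁ * R / ρ ^ 2) ^ m) := by
              apply mul_le_mul_of_nonneg_left P6 (by positivity)
          _ ≤ (C ^ 2 * (β₁ / β₂) ^ m * Real.exp (1 / (4 * β₁))) *
                ((m.factorial : ℝ) * (max (ρ ^ 2 / (β₁ * R))⁻¹ 0) ^ m) := by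
              apply mul_le_mul_of_nonneg_left
                (mul_le_mul_of_nonneg_left P7 (by positivity)) (by positivity)
          _ = C ^ 2 * (β₁ / β₂) ^ m * Real.exp (1 / (4 * β₁)) * (m.factorial : ℝ) *
                (max (ρ ^ 2 / (β₁ * R))⁻¹ 0) ^ m := by ring
    _ = (C ^ 2 * (β₁ / β₂) ^ m * Real.exp (1 / (4 * β₁)) * (m.factorial : ℝ) *
          (max (ρ ^ 2 / (β₁ * R))⁻¹ 0) ^ m) *
          (C⁻¹ * T ^ (-a) * (mTx * mTy) ^ γ * Real.exp (-(d ^ 2 / (β₂ * T)))) := by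
        rw [hβ₂Trw]


lemma weight_bound {γ R t ax ay : ℝ} (hax : 0 < ax) (ht0 : 0 < t) (htR : t < R)
    (hy2 : ax / 2 ≤ ay) (hay : 0 < ay) :
    (min (ax / Real.sqrt t) 1 * min (ay / Real.sqrt t) 1) ^ γ ≤
      aux1 γ ax R * (min ay 1) ^ γ := by
  have hR : 0 < R := ht0.trans htR
  have hsqt : 0 < Real.sqrt t := Real.sqrt_pos.mpr ht0
  have hsqR : 0 < Real.sqrt R := Real.sqrt_pos.mpr hR
  have hmtx0 : 0 < min (ax / Real.sqrt t) 1 := lt_min (by positivity) one_pos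
  have hmty0 : 0 < min (ay / Real.sqrt t) 1 := lt_min (by positivity) one_pos
  have hminy0 : 0 < min ay 1 := lt_min hay one_pos
  have hb1 : 0 < min (ax / 2) 1 := lt_min (by positivity) one_pos
  have hb2 : 0 < min (ax / Real.sqrt R) 1 := lt_min (by positivity) one_pos
  have hb3 : 0 < min (ax / (2 * Real.sqrt R)) 1 := lt_min (by positivity) one_pos
  rw [Real.mul_rpow hmtx0.le hmty0.le]
  unfold aux1
  rcases le_or_gt 0 γ with hγ0 | hγ0
  · rw [abs_of_nonneg hγ0]
    have e1 : (min (ax / Real.sqrt t) 1) ^ γ ≤ 1 :=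
      Real.rpow_le_one hmtx0.le (min_le_right _ _) hγ0
    have e2 : (min (ay / Real.sqrt t) 1) ^ γ ≤ 1 :=
      Real.rpow_le_one hmty0.le (min_le_right _ _) hγ0
    have e3 : (min (ax / 2) 1) ^ γ ≤ (min ay 1) ^ γ :=
      Real.rpow_le_rpow hb1.le (min_le_min hy2 le_rfl) hγ0
    have e4 : (min (ax / 2) 1) ^ (-γ) * (min (ax / 2) 1) ^ γ = 1 := by
      rw [← Real.rpow_add hb1]
      simp
    have e5 : (1:ℝ) ≤ (min (ax / Real.sqrt R) 1) ^ (-γ) :=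
      Real.one_le_rpow_of_pos_of_le_one_of_nonpos hb2 (min_le_right _ _) (by linarith)
    have e6 : (1:ℝ) ≤ (min (ax / (2 * Real.sqrt R)) 1) ^ (-γ) :=
      Real.one_le_rpow_of_pos_of_le_one_of_nonpos hb3 (min_le_right _ _) (by linarith)
    have p1 : (0:ℝ) ≤ (min (ax / 2) 1) ^ (-γ) := Real.rpow_nonneg hb1.le _
    have p3 : (0:ℝ) ≤ (min ay 1) ^ γ := Real.rpow_nonneg hminy0.le _
    have hX : (0:ℝ) ≤ (min (ax / 2) 1) ^ (-γ) * (min ay 1) ^ γ := mul_nonneg p1 p3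
    calc (min (ax / Real.sqrt t) 1) ^ γ * (min (ay / Real.sqrt t) 1) ^ γ
        ≤ 1 := mul_le_one₀ e1 (Real.rpow_nonneg hmty0.le _) e2
      _ = (min (ax / 2) 1) ^ (-γ) * (min (ax / 2) 1) ^ γ := e4.symm
      _ ≤ (min (ax / 2) 1) ^ (-γ) * (min ay 1) ^ γ := mul_le_mul_of_nonneg_left e3 p1
      _ = ((min (ax / 2) 1) ^ (-γ) * (min ay 1) ^ γ) * 1 * 1 := by ring
      _ ≤ ((min (ax / 2) 1) ^ (-γ) * (min ay 1) ^ γ) *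
            (min (ax / Real.sqrt R) 1) ^ (-γ) * (min (ax / (2 * Real.sqrt R)) 1) ^ (-γ) := by
          exact mul_le_mul (mul_le_mul_of_nonneg_left e5 hX) e6 zero_le_one
            (mul_nonneg hX (le_trans zero_le_one e5))
      _ = (min (ax / 2) 1) ^ (-γ) * (min (ax / Real.sqrt R) 1) ^ (-γ) *
            (min (ax / (2 * Real.sqrt R)) 1) ^ (-γ) * (min ay 1) ^ γ := by ring
  · rw [abs_of_neg hγ0, neg_neg]
    have e1 : min (ax / Real.sqrt R) 1 ≤ min (ax / Real.sqrt t) 1 :=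
      min_div_sqrt_anti ht0 htR.le hax.le
    have e2 : min (ax / (2 * Real.sqrt R)) 1 ≤ min (ay / Real.sqrt t) 1 := by
      refine min_le_min ?_ le_rfl
      rw [div_le_div_iff₀ (by positivity) hsqt]
      have h1 : Real.sqrt t ≤ Real.sqrt R := Real.sqrt_le_sqrt htR.le
      nlinarith [mul_le_mul (show ax ≤ 2 * ay by linarith) h1 hsqt.le
        (by positivity : (0:ℝ) ≤ 2 * ay)]
    have f1 : (min (ax / Real.sqrt t) 1) ^ γ ≤ (min (ax / Real.sqrt R) 1) ^ γ :=
      Real.rpow_le_rpow_of_nonpos hb2 e1 hγ0.le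
    have f2 : (min (ay / Real.sqrt t) 1) ^ γ ≤ (min (ax / (2 * Real.sqrt R)) 1) ^ γ :=
      Real.rpow_le_rpow_of_nonpos hb3 e2 hγ0.le
    have f3 : (1:ℝ) ≤ (min ay 1) ^ γ :=
      Real.one_le_rpow_of_pos_of_le_one_of_nonpos hminy0 (min_le_right _ _) hγ0.le
    have f4 : (1:ℝ) ≤ (min (ax / 2) 1) ^ γ :=
      Real.one_le_rpow_of_pos_of_le_one_of_nonpos hb1 (min_le_right _ _) hγ0.le
    have q2 : (0:ℝ) ≤ (min (ax / Real.sqrt R) 1) ^ γ := Real.rpow_nonneg hb2.le _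
    have q3 : (0:ℝ) ≤ (min (ax / (2 * Real.sqrt R)) 1) ^ γ := Real.rpow_nonneg hb3.le _
    have hP : (0:ℝ) ≤ (min (ax / Real.sqrt R) 1) ^ γ * (min (ax / (2 * Real.sqrt R)) 1) ^ γ :=
      mul_nonneg q2 q3
    calc (min (ax / Real.sqrt t) 1) ^ γ * (min (ay / Real.sqrt t) 1) ^ γ
        ≤ (min (ax / Real.sqrt R) 1) ^ γ * (min (ax / (2 * Real.sqrt R)) 1) ^ γ :=
          mul_le_mul f1 f2 (Real.rpow_nonneg hmty0.le _) q2
      _ = 1 * ((min (ax / Real.sqrt R) 1) ^ γ * (min (ax / (2 * Real.sqrt R)) 1) ^ γ) * 1 := by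
          ring
      _ ≤ (min (ax / 2) 1) ^ γ *
            ((min (ax / Real.sqrt R) 1) ^ γ * (min (ax / (2 * Real.sqrt R)) 1) ^ γ) *
            (min ay 1) ^ γ := by
          exact mul_le_mul (mul_le_mul f4 le_rfl hP (le_trans zero_le_one f4)) f3 zero_le_one
            (mul_nonneg (le_trans zero_le_one f4) hP)
      _ = (min (ax / 2) 1) ^ γ * (min (ax / Real.sqrt R) 1) ^ γ *
            (min (ax / (2 * Real.sqrt R)) 1) ^ γ * (min ay 1) ^ γ := by ring

end Stmt12Aux



set_option maxHeartbeats 2000000 in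
/-- Maximal inequality for the Hardy heat kernel: there exist locally
bounded functions `ξ₁, ξ₂ > 1` on `Ω = ℝⁿ ∖ {0}` and `α > 0` such that
`sup_{0<t<R} ∫ p^H_t(x,y) f(y) dy ≤ ξ₁(x,R) M^H_{√(αR)} f(x) + ξ₂(x,R) ∫ p^H_{γ̂R}(x,y) f(y) dy`
for all `f ≥ 0` and `x ∈ Ω`, where `γ̂ = β₁/β₂`. -/
theorem stmt_12 (n : ℕ) (hn : 3 ≤ n) (b : ℝ)
    (hD : 0 ≤ b + ((n : ℝ) - 2) ^ 2 / 4)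
    (γ : ℝ) (hγ : γ = Real.sqrt (b + ((n : ℝ) - 2) ^ 2 / 4) - (n : ℝ) / 2 + 1)
    (pH : ℝ → EuclideanSpace ℝ (Fin n) → EuclideanSpace ℝ (Fin n) → ℝ)
    (hmeas : ∀ t : ℝ, 0 < t → Measurable (Function.uncurry (pH t)))
    (hnonneg : ∀ t : ℝ, 0 < t → ∀ x y, 0 ≤ pH t x y)
    (C β₁ β₂ : ℝ) (hC : 1 ≤ C) (hβ₂ : 0 < β₂) (hβ : β₂ ≤ β₁)
    (hbound : ∀ t : ℝ, 0 < t → ∀ x y : EuclideanSpace ℝ (Fin n), x ≠ 0 → y ≠ 0 →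
      C⁻¹ * t ^ (-(n : ℝ) / 2) *
          (min (‖x‖ / Real.sqrt t) 1 * min (‖y‖ / Real.sqrt t) 1) ^ γ *
          Real.exp (-(‖x - y‖ ^ 2 / (β₂ * t))) ≤ pH t x y ∧
      pH t x y ≤ C * t ^ (-(n : ℝ) / 2) *
          (min (‖x‖ / Real.sqrt t) 1 * min (‖y‖ / Real.sqrt t) 1) ^ γ *
          Real.exp (-(‖x - y‖ ^ 2 / (β₁ * t)))) :
    ∃ ξ₁ ξ₂ : EuclideanSpace ℝ (Fin n) → ℝ → ℝ,
      (∀ x r, 1 < ξ₁ x r ∧ 1 < ξ₂ x r) ∧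
      (∀ r : ℝ, 0 < r → ∀ K : Set (EuclideanSpace ℝ (Fin n)), IsCompact K →
        K ⊆ {x | x ≠ 0} → ∃ M : ℝ, ∀ x ∈ K, ξ₁ x r ≤ M ∧ ξ₂ x r ≤ M) ∧
      ∃ α : ℝ, 0 < α ∧
        ∀ R : ℝ, 0 < R →
          ∀ f : EuclideanSpace ℝ (Fin n) → ℝ, Measurable f → (∀ y, 0 ≤ f y) →
          ∀ x : EuclideanSpace ℝ (Fin n), x ≠ 0 →
            (⨆ (t : ℝ) (_ : t ∈ Set.Ioo 0 R),
                ∫⁻ y, ENNReal.ofReal (pH t x y * f y) ∂volume)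
              ≤ ENNReal.ofReal (ξ₁ x R) * hardyMax n γ (Real.sqrt (α * R)) f x
                + ENNReal.ofReal (ξ₂ x R) *
                  ∫⁻ y, ENNReal.ofReal (pH ((β₁ / β₂) * R) x y * f y) ∂volume := by
  classical
  have hC0 : (0:ℝ) < C := lt_of_lt_of_le one_pos hC
  have hβ₁ : 0 < β₁ := lt_of_lt_of_le hβ₂ hβ
  haveI : Nonempty (Fin n) := ⟨⟨0, by omega⟩⟩
  haveI : Nontrivial (EuclideanSpace ℝ (Fin n)) := by
    apply Module.nontrivial_of_finrank_pos (R := ℝ)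
    rw [finrank_euclideanSpace_fin]
    omega
  set m : ℕ := n + ⌈|γ|⌉₊ + 1 with hm
  have hmge : (n : ℝ) / 2 + |γ| ≤ (m : ℝ) := by
    have h1 : |γ| ≤ (⌈|γ|⌉₊ : ℝ) := Nat.le_ceil _
    have h2 : (n : ℝ) / 2 ≤ (n : ℝ) := by
      have : (0:ℝ) ≤ (n : ℝ) := Nat.cast_nonneg n
      linarith
    rw [hm]
    push_cast
    linarith
  set Vr : ℝ := (volume (ball (0 : EuclideanSpace ℝ (Fin n)) 1)).toReal with hVr
  set S : ℝ := 2 * (((n + 1).factorial : ℝ) * (max β₁ 1) ^ (n + 1) * 2 ^ (n + 1) + 1) with hS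
  have hS0 : (0:ℝ) ≤ S := by rw [hS]; positivity
  have hVr0 : (0:ℝ) ≤ Vr := ENNReal.toReal_nonneg
  refine ⟨fun x r => C * Stmt12Aux.aux1 γ ‖x‖ r * S * Vr + 2,
          fun x r => Stmt12Aux.aux2 C β₁ β₂ m ‖x‖ r + 2, ?_, ?_, 1, one_pos, ?_⟩
  · intro x r
    constructor
    · show (1:ℝ) < C * Stmt12Aux.aux1 γ ‖x‖ r * S * Vr + 2
      have h1 := Stmt12Aux.aux1_nonneg γ r (norm_nonneg x)
      have : (0:ℝ) ≤ C * Stmt12Aux.aux1 γ ‖x‖ r * S * Vr :=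
        mul_nonneg (mul_nonneg (mul_nonneg hC0.le h1) hS0) hVr0
      linarith
    · show (1:ℝ) < Stmt12Aux.aux2 C β₁ β₂ m ‖x‖ r + 2
      have h1 := Stmt12Aux.aux2_nonneg C β₁ β₂ m ‖x‖ r hβ₁ hβ₂
      linarith
  · intro r hr K hK hKsub
    rcases K.eq_empty_or_nonempty with rfl | hne
    · exact ⟨0, fun x hx => absurd hx (Set.notMem_empty x)⟩
    obtain ⟨x₀, hx₀K, hmin'⟩ := hK.exists_isMinOn hne continuous_norm.continuousOn
    have hmin : ∀ z ∈ K, ‖x₀‖ ≤ ‖z‖ := fun z hz => isMinOn_iff.mp hmin' z hz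
    have hx₀ : 0 < ‖x₀‖ := norm_pos_iff.mpr (hKsub hx₀K)
    refine ⟨max (C * Stmt12Aux.aux1 γ ‖x₀‖ r * S * Vr + 2)
      (Stmt12Aux.aux2 C β₁ β₂ m ‖x₀‖ r + 2), fun x hx => ⟨?_, ?_⟩⟩
    · refine le_trans ?_ (le_max_left _ _)
      show C * Stmt12Aux.aux1 γ ‖x‖ r * S * Vr + 2 ≤ C * Stmt12Aux.aux1 γ ‖x₀‖ r * S * Vr + 2
      have h1 := Stmt12Aux.aux1_anti γ r hx₀ (hmin x hx) hr
      have h2 : C * Stmt12Aux.aux1 γ ‖x‖ r * S * Vr ≤ C * Stmt12Aux.aux1 γ ‖x₀‖ r * S * Vr :=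
        mul_le_mul_of_nonneg_right
          (mul_le_mul_of_nonneg_right (mul_le_mul_of_nonneg_left h1 hC0.le) hS0) hVr0
      linarith
    · refine le_trans ?_ (le_max_right _ _)
      show Stmt12Aux.aux2 C β₁ β₂ m ‖x‖ r + 2 ≤ Stmt12Aux.aux2 C β₁ β₂ m ‖x₀‖ r + 2
      have h1 := Stmt12Aux.aux2_anti C hβ₁ hβ₂ m hx₀ (hmin x hx) hr
      linarith
  · intro R hR f hfm hf0 x hx
    have hxn : 0 < ‖x‖ := norm_pos_iff.mpr hx
    have hsqR : 0 < Real.sqrt R := Real.sqrt_pos.mpr hR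
    rw [one_mul]
    set ρ : ℝ := min (Real.sqrt R) ‖x‖ / 2 with hρ
    have hminRx : 0 < min (Real.sqrt R) ‖x‖ := lt_min hsqR hxn
    have hρ0 : 0 < ρ := by rw [hρ]; positivity
    have hρR : ρ < Real.sqrt R := by
      calc ρ ≤ Real.sqrt R / 2 := by rw [hρ]; gcongr; exact min_le_left _ _
        _ < Real.sqrt R := by linarith
    have hρx2 : ρ ≤ ‖x‖ / 2 := by
      rw [hρ]
      gcongr
      exact min_le_right _ _
    have hρsq : ρ ^ 2 ≤ R / 4 := by
      have h1 : ρ ≤ Real.sqrt R / 2 := by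
        rw [hρ]; gcongr; exact min_le_left _ _
      have h3 : (Real.sqrt R / 2) ^ 2 = R / 4 := by
        rw [div_pow, Real.sq_sqrt hR.le]
        norm_num
      calc ρ ^ 2 ≤ (Real.sqrt R / 2) ^ 2 := pow_le_pow_left₀ hρ0.le h1 2
        _ = R / 4 := h3
    set Mg := hardyMax n γ (Real.sqrt R) f x with hMgdef
    set g : EuclideanSpace ℝ (Fin n) → ℝ := fun y => (min ‖y‖ 1) ^ γ * f y with hg
    have hgm : Measurable g :=
      ((Stmt12Aux.measurable_rpow_const γ).comp
        (measurable_norm.min measurable_const)).mul hfm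
    have hg0 : ∀ y, 0 ≤ g y := fun y =>
      mul_nonneg (Real.rpow_nonneg (le_min (norm_nonneg y) zero_le_one) _) (hf0 y)
    have hL : ∀ s : ℝ, 0 < s → s < Real.sqrt R →
        (∫⁻ y in ball x s, ENNReal.ofReal (g y) ∂volume) ≤ volume (ball x s) * Mg := by
      intro s hs0 hsR
      have hle : (volume (ball x s))⁻¹ *
          ∫⁻ y in ball x s, ENNReal.ofReal (g y) ∂volume ≤ Mg := by
        rw [hMgdef]
        unfold hardyMax
        exact le_iSup₂ (f := fun s (_ : s ∈ Set.Ioo 0 (Real.sqrt R)) =>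
          (volume (ball x s))⁻¹ *
            ∫⁻ y in ball x s, ENNReal.ofReal ((min ‖y‖ 1) ^ γ * f y) ∂volume) s ⟨hs0, hsR⟩
      have h0 : volume (ball x s) ≠ 0 := (measure_ball_pos volume x hs0).ne'
      have htop : volume (ball x s) ≠ ⊤ := measure_ball_lt_top.ne
      calc ∫⁻ y in ball x s, ENNReal.ofReal (g y) ∂volume
          = volume (ball x s) * ((volume (ball x s))⁻¹ *
              ∫⁻ y in ball x s, ENNReal.ofReal (g y) ∂volume) := by
            rw [← mul_assoc, ENNReal.mul_inv_cancel h0 htop, one_mul]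
        _ ≤ volume (ball x s) * Mg := mul_le_mul_right hle _
    refine iSup₂_le fun t ht => ?_
    obtain ⟨ht0, htR⟩ := ht
    show (∫⁻ y, ENNReal.ofReal (pH t x y * f y) ∂volume)
        ≤ ENNReal.ofReal (C * Stmt12Aux.aux1 γ ‖x‖ R * S * Vr + 2) * Mg
          + ENNReal.ofReal (Stmt12Aux.aux2 C β₁ β₂ m ‖x‖ R + 2) *
            ∫⁻ y, ENNReal.ofReal (pH ((β₁ / β₂) * R) x y * f y) ∂volume
    rw [← lintegral_add_compl (fun y => ENNReal.ofReal (pH t x y * f y))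
      (measurableSet_ball (x := x) (ε := ρ))]
    refine add_le_add ?_ ?_
    · -- INNER ESTIMATE
      have hA₁0 : 0 ≤ Stmt12Aux.aux1 γ ‖x‖ R := Stmt12Aux.aux1_nonneg γ R (norm_nonneg x)
      have hCA₁ : 0 ≤ C * Stmt12Aux.aux1 γ ‖x‖ R := mul_nonneg hC0.le hA₁0
      have hsqt : 0 < Real.sqrt t := Real.sqrt_pos.mpr ht0
      obtain ⟨K, hK⟩ : ∃ K : ℕ, ρ < 2 ^ K * Real.sqrt t := by
        obtain ⟨K, hK2⟩ := pow_unbounded_of_one_lt (ρ / Real.sqrt t) one_lt_two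
        rw [div_lt_iff₀ hsqt] at hK2
        exact ⟨K, by linarith⟩
      set ck : ℕ → ℝ := fun k => if k = 0 then 1 else Real.exp (-(4 ^ (k - 1) / β₁)) with hckdef
      have hck0 : ∀ k, 0 ≤ ck k := by
        intro k
        rw [hckdef]
        dsimp only
        split
        · exact zero_le_one
        · positivity
      set rk : ℕ → ℝ := fun k => min (2 ^ k * Real.sqrt t) ρ with hrkdef
      have hrk0 : ∀ k, 0 < rk k := fun k => lt_min (by positivity) hρ0
      have hrkR : ∀ k, rk k < Real.sqrt R := fun k => lt_of_le_of_lt (min_le_right _ _) hρR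
      have hrkle : ∀ k : ℕ, rk k ≤ 2 ^ k * Real.sqrt t := fun k => min_le_left _ _
      have hindm : ∀ k : ℕ, Measurable ((ball x (rk k)).indicator
          (fun y => ENNReal.ofReal ((ck k * t ^ (-(n:ℝ)/2)) * g y))) := fun k =>
        ((measurable_const.mul hgm).ennreal_ofReal).indicator measurableSet_ball
      have hpow2 : ∀ k : ℕ, t ^ (-(n:ℝ)/2) * (2 ^ k * Real.sqrt t) ^ n = 2 ^ (k * n) := by
        intro k
        have h1 : (Real.sqrt t) ^ n = t ^ ((n:ℝ) / 2) := by
          rw [Real.sqrt_eq_rpow, ← Real.rpow_natCast (t ^ ((1:ℝ)/2)) n,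
            ← Real.rpow_mul ht0.le]
          congr 1
          ring
        rw [mul_pow, h1, ← pow_mul]
        rw [← mul_assoc, mul_comm (t ^ (-(n:ℝ)/2)) ((2:ℝ) ^ (k*n)), mul_assoc,
          ← Real.rpow_add ht0]
        rw [show -(n:ℝ)/2 + (n:ℝ)/2 = 0 by ring, Real.rpow_zero, mul_one]
      have hpt : ∀ y ∈ ball x ρ, ENNReal.ofReal (pH t x y * f y) ≤
          ENNReal.ofReal (C * Stmt12Aux.aux1 γ ‖x‖ R) * ∑ k ∈ Finset.range (K + 1),
            (ball x (rk k)).indicator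
              (fun y => ENNReal.ofReal ((ck k * t ^ (-(n:ℝ)/2)) * g y)) y := by
        intro y hy
        have hdy : ‖x - y‖ < ρ := by
          rw [mem_ball, dist_eq_norm] at hy
          rwa [norm_sub_rev]
        have hy2 : ‖x‖ / 2 < ‖y‖ := by
          have h1 : ‖x‖ - ‖y‖ ≤ ‖x - y‖ := norm_sub_norm_le x y
          linarith
        have hyn : 0 < ‖y‖ := lt_of_le_of_lt (by positivity) hy2
        have hy0 : y ≠ 0 := norm_pos_iff.mp hyn
        have hW := Stmt12Aux.weight_bound (γ := γ) hxn ht0 htR hy2.le hyn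
        have hex : ∃ k : ℕ, ‖x - y‖ < 2 ^ k * Real.sqrt t := ⟨K, hdy.trans hK⟩
        have hk₀spec : ‖x - y‖ < 2 ^ (Nat.find hex) * Real.sqrt t := Nat.find_spec hex
        have hk₀K : Nat.find hex ≤ K := Nat.find_min' hex (hdy.trans hK)
        have hmemk : y ∈ ball x (rk (Nat.find hex)) := by
          have h1 : dist y x < min (2 ^ (Nat.find hex) * Real.sqrt t) ρ := by
            rw [dist_eq_norm, norm_sub_rev]
            exact lt_min hk₀spec hdy
          simpa [hrkdef, mem_ball] using h1
        have hE : Real.exp (-(‖x - y‖ ^ 2 / (β₁ * t))) ≤ ck (Nat.find hex) := by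
          rcases Nat.eq_zero_or_pos (Nat.find hex) with h0 | h0
          · rw [hckdef]
            simp only [h0, if_pos]
            exact Real.exp_le_one_iff.mpr (neg_nonpos.mpr (by positivity))
          · have hnot : ¬ (‖x - y‖ < 2 ^ (Nat.find hex - 1) * Real.sqrt t) :=
              Nat.find_min hex (by omega)
            push_neg at hnot
            rw [hckdef]
            simp only [if_neg (by omega : ¬ Nat.find hex = 0)]
            apply Real.exp_le_exp.mpr
            apply neg_le_neg
            rw [div_le_div_iff₀ (by positivity) (by positivity)]
            have hsq : (2 ^ (Nat.find hex - 1) * Real.sqrt t) ^ 2 ≤ ‖x - y‖ ^ 2 :=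
              pow_le_pow_left₀ (by positivity) hnot 2
            have hid : ((2:ℝ) ^ (Nat.find hex - 1) * Real.sqrt t) ^ 2
                = 4 ^ (Nat.find hex - 1) * t := by
              rw [mul_pow, Real.sq_sqrt ht0.le]
              congr 1
              rw [← pow_mul, show (4:ℝ) = 2^2 by norm_num, ← pow_mul]
              congr 1
              ring
            rw [hid] at hsq
            nlinarith [mul_nonneg (sub_nonneg.mpr hsq) hβ₁.le]
        have hub := (hbound t ht0 x y hx hy0).2
        have hreal : pH t x y * f y ≤ (C * Stmt12Aux.aux1 γ ‖x‖ R) *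
            ((ck (Nat.find hex) * t ^ (-(n:ℝ)/2)) * g y) := by
          have h2 : pH t x y ≤ C * t ^ (-(n:ℝ)/2) *
              (Stmt12Aux.aux1 γ ‖x‖ R * (min ‖y‖ 1) ^ γ) * ck (Nat.find hex) := by
            calc pH t x y ≤ C * t ^ (-(n:ℝ)/2) *
                (min (‖x‖ / Real.sqrt t) 1 * min (‖y‖ / Real.sqrt t) 1) ^ γ *
                Real.exp (-(‖x - y‖ ^ 2 / (β₁ * t))) := hub
              _ ≤ C * t ^ (-(n:ℝ)/2) * (Stmt12Aux.aux1 γ ‖x‖ R * (min ‖y‖ 1) ^ γ) *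
                  ck (Nat.find hex) := by
                  have hq1 : (0:ℝ) ≤ C * t ^ (-(n:ℝ)/2) := by positivity
                  have hq2 : (0:ℝ) ≤ Stmt12Aux.aux1 γ ‖x‖ R * (min ‖y‖ 1) ^ γ :=
                    mul_nonneg hA₁0 (Real.rpow_nonneg (le_min (norm_nonneg y) zero_le_one) _)
                  exact mul_le_mul (mul_le_mul_of_nonneg_left hW hq1) hE (Real.exp_pos _).le
                    (mul_nonneg hq1 hq2)
          calc pH t x y * f y
              ≤ (C * t ^ (-(n:ℝ)/2) * (Stmt12Aux.aux1 γ ‖x‖ R * (min ‖y‖ 1) ^ γ) *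
                  ck (Nat.find hex)) * f y := mul_le_mul_of_nonneg_right h2 (hf0 y)
            _ = (C * Stmt12Aux.aux1 γ ‖x‖ R) *
                  ((ck (Nat.find hex) * t ^ (-(n:ℝ)/2)) * g y) := by
                simp only [hg]
                ring
        calc ENNReal.ofReal (pH t x y * f y)
            ≤ ENNReal.ofReal ((C * Stmt12Aux.aux1 γ ‖x‖ R) *
                ((ck (Nat.find hex) * t ^ (-(n:ℝ)/2)) * g y)) :=
              ENNReal.ofReal_le_ofReal hreal
          _ = ENNReal.ofReal (C * Stmt12Aux.aux1 γ ‖x‖ R) *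
                ENNReal.ofReal ((ck (Nat.find hex) * t ^ (-(n:ℝ)/2)) * g y) :=
              ENNReal.ofReal_mul hCA₁
          _ = ENNReal.ofReal (C * Stmt12Aux.aux1 γ ‖x‖ R) * (ball x (rk (Nat.find hex))).indicator
                (fun y => ENNReal.ofReal ((ck (Nat.find hex) * t ^ (-(n:ℝ)/2)) * g y)) y := by
              rw [Set.indicator_of_mem hmemk]
          _ ≤ ENNReal.ofReal (C * Stmt12Aux.aux1 γ ‖x‖ R) * ∑ k ∈ Finset.range (K + 1),
                (ball x (rk k)).indicator
                  (fun y => ENNReal.ofReal ((ck k * t ^ (-(n:ℝ)/2)) * g y)) y := by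
              apply mul_le_mul_right
              exact Finset.single_le_sum (f := fun k => (ball x (rk k)).indicator
                  (fun y => ENNReal.ofReal ((ck k * t ^ (-(n:ℝ)/2)) * g y)) y)
                (fun k _ => zero_le) (Finset.mem_range.mpr (by omega))
      have hterm : ∀ k : ℕ,
          ENNReal.ofReal (ck k * t ^ (-(n:ℝ)/2)) * (volume (ball x (rk k)) * Mg) ≤
          ENNReal.ofReal (ck k * 2 ^ (k * n)) *
            (volume (ball (0 : EuclideanSpace ℝ (Fin n)) 1) * Mg) := by
        intro k
        have hvol : volume (ball x (rk k)) =
            ENNReal.ofReal (rk k ^ n) * volume (ball (0 : EuclideanSpace ℝ (Fin n)) 1) := by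
          rw [Measure.addHaar_ball volume x (hrk0 k).le, finrank_euclideanSpace_fin]
        have r1 : ck k * t ^ (-(n:ℝ)/2) * rk k ^ n ≤ ck k * 2 ^ (k * n) := by
          calc ck k * t ^ (-(n:ℝ)/2) * rk k ^ n
              ≤ ck k * t ^ (-(n:ℝ)/2) * (2 ^ k * Real.sqrt t) ^ n := by
                apply mul_le_mul_of_nonneg_left (pow_le_pow_left₀ (hrk0 k).le (hrkle k) n)
                  (mul_nonneg (hck0 k) (Real.rpow_pos_of_pos ht0 _).le)
            _ = ck k * (t ^ (-(n:ℝ)/2) * (2 ^ k * Real.sqrt t) ^ n) := by ring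
            _ = ck k * 2 ^ (k * n) := by rw [hpow2 k]
        calc ENNReal.ofReal (ck k * t ^ (-(n:ℝ)/2)) * (volume (ball x (rk k)) * Mg)
            = ENNReal.ofReal (ck k * t ^ (-(n:ℝ)/2)) *
                ((ENNReal.ofReal (rk k ^ n) * volume (ball (0:EuclideanSpace ℝ (Fin n)) 1)) * Mg) := by
              rw [hvol]
          _ = (ENNReal.ofReal (ck k * t ^ (-(n:ℝ)/2)) * ENNReal.ofReal (rk k ^ n)) *
                (volume (ball (0:EuclideanSpace ℝ (Fin n)) 1) * Mg) := by ring
          _ = ENNReal.ofReal (ck k * t ^ (-(n:ℝ)/2) * rk k ^ n) *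
                (volume (ball (0:EuclideanSpace ℝ (Fin n)) 1) * Mg) := by
              rw [← ENNReal.ofReal_mul (mul_nonneg (hck0 k) (Real.rpow_pos_of_pos ht0 _).le)]
          _ ≤ ENNReal.ofReal (ck k * 2 ^ (k * n)) *
                (volume (ball (0:EuclideanSpace ℝ (Fin n)) 1) * Mg) :=
              mul_le_mul_left (ENNReal.ofReal_le_ofReal r1) _
      have hsum : ∑ k ∈ Finset.range (K + 1), ck k * 2 ^ (k * n) ≤ S := by
        have hBc0 : (0:ℝ) ≤ ((n+1).factorial : ℝ) * (max β₁ 1) ^ (n+1) * 2 ^ (n+1) := by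
          positivity
        have hper : ∀ k : ℕ, ck k * 2 ^ (k * n) ≤
            (((n+1).factorial : ℝ) * (max β₁ 1) ^ (n+1) * 2 ^ (n+1) + 1) * (1/2) ^ k := by
          intro k
          cases k with
          | zero =>
              simp only [hckdef]
              norm_num
          | succ j =>
              rw [hckdef]
              simp only [Nat.succ_ne_zero, if_false, Nat.succ_sub_one]
              have h1 := Stmt12Aux.exp_term_bound n hβ₁ j
              have h2 : (0:ℝ) ≤ (1/2:ℝ)^(j+1) := by positivity
              calc Real.exp (-(4^j/β₁)) * 2 ^ ((j+1)*n)
                  ≤ (((n+1).factorial : ℝ) * (max β₁ 1) ^ (n+1) * 2 ^ (n+1)) * (1/2)^(j+1) := h1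
                _ ≤ (((n+1).factorial : ℝ) * (max β₁ 1) ^ (n+1) * 2 ^ (n+1) + 1) * (1/2)^(j+1) :=
                    mul_le_mul_of_nonneg_right (by linarith) h2
        calc ∑ k ∈ Finset.range (K+1), ck k * 2 ^ (k * n)
            ≤ ∑ k ∈ Finset.range (K+1),
                (((n+1).factorial : ℝ) * (max β₁ 1) ^ (n+1) * 2 ^ (n+1) + 1) * (1/2)^k :=
              Finset.sum_le_sum (fun k _ => hper k)
          _ = (((n+1).factorial : ℝ) * (max β₁ 1) ^ (n+1) * 2 ^ (n+1) + 1) *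
                ∑ k ∈ Finset.range (K+1), (1/2:ℝ)^k := by rw [← Finset.mul_sum]
          _ ≤ (((n+1).factorial : ℝ) * (max β₁ 1) ^ (n+1) * 2 ^ (n+1) + 1) * 2 :=
              mul_le_mul_of_nonneg_left (sum_geometric_two_le _) (by linarith)
          _ = S := by rw [hS]; ring
      have hν : volume (ball (0 : EuclideanSpace ℝ (Fin n)) 1) = ENNReal.ofReal Vr := by
        rw [hVr, ENNReal.ofReal_toReal measure_ball_lt_top.ne]
      calc ∫⁻ y in ball x ρ, ENNReal.ofReal (pH t x y * f y) ∂volume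
          ≤ ∫⁻ y in ball x ρ, (ENNReal.ofReal (C * Stmt12Aux.aux1 γ ‖x‖ R) *
              ∑ k ∈ Finset.range (K + 1), (ball x (rk k)).indicator
                (fun y => ENNReal.ofReal ((ck k * t ^ (-(n:ℝ)/2)) * g y)) y) ∂volume :=
            setLIntegral_mono
              (measurable_const.mul (Finset.measurable_sum _ (fun k _ => hindm k))) hpt
        _ ≤ ∫⁻ y, (ENNReal.ofReal (C * Stmt12Aux.aux1 γ ‖x‖ R) *
              ∑ k ∈ Finset.range (K + 1), (ball x (rk k)).indicator
                (fun y => ENNReal.ofReal ((ck k * t ^ (-(n:ℝ)/2)) * g y)) y) ∂volume :=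
            setLIntegral_le_lintegral _ _
        _ = ENNReal.ofReal (C * Stmt12Aux.aux1 γ ‖x‖ R) *
              ∫⁻ y, (∑ k ∈ Finset.range (K + 1), (ball x (rk k)).indicator
                (fun y => ENNReal.ofReal ((ck k * t ^ (-(n:ℝ)/2)) * g y)) y) ∂volume :=
            lintegral_const_mul' _ _ ENNReal.ofReal_ne_top
        _ = ENNReal.ofReal (C * Stmt12Aux.aux1 γ ‖x‖ R) *
              ∑ k ∈ Finset.range (K + 1), ∫⁻ y, (ball x (rk k)).indicator
                (fun y => ENNReal.ofReal ((ck k * t ^ (-(n:ℝ)/2)) * g y)) y ∂volume := by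
            rw [lintegral_finset_sum _ (fun k _ => hindm k)]
        _ = ENNReal.ofReal (C * Stmt12Aux.aux1 γ ‖x‖ R) *
              ∑ k ∈ Finset.range (K + 1),
                ∫⁻ y in ball x (rk k), ENNReal.ofReal ((ck k * t ^ (-(n:ℝ)/2)) * g y) ∂volume := by
            congr 1
            refine Finset.sum_congr rfl fun k _ => ?_
            rw [lintegral_indicator measurableSet_ball]
        _ = ENNReal.ofReal (C * Stmt12Aux.aux1 γ ‖x‖ R) *
              ∑ k ∈ Finset.range (K + 1),
                ENNReal.ofReal (ck k * t ^ (-(n:ℝ)/2)) *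
                  ∫⁻ y in ball x (rk k), ENNReal.ofReal (g y) ∂volume := by
            congr 1
            refine Finset.sum_congr rfl fun k _ => ?_
            rw [← lintegral_const_mul' _ _ ENNReal.ofReal_ne_top]
            congr 1
            funext y
            rw [← ENNReal.ofReal_mul (mul_nonneg (hck0 k) (Real.rpow_pos_of_pos ht0 _).le)]
        _ ≤ ENNReal.ofReal (C * Stmt12Aux.aux1 γ ‖x‖ R) *
              ∑ k ∈ Finset.range (K + 1),
                ENNReal.ofReal (ck k * t ^ (-(n:ℝ)/2)) * (volume (ball x (rk k)) * Mg) := by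
            refine mul_le_mul_right (Finset.sum_le_sum fun k _ => ?_) _
            exact mul_le_mul_right (hL (rk k) (hrk0 k) (hrkR k)) _
        _ ≤ ENNReal.ofReal (C * Stmt12Aux.aux1 γ ‖x‖ R) *
              ∑ k ∈ Finset.range (K + 1),
                ENNReal.ofReal (ck k * 2 ^ (k * n)) *
                  (volume (ball (0 : EuclideanSpace ℝ (Fin n)) 1) * Mg) :=
            mul_le_mul_right (Finset.sum_le_sum fun k _ => hterm k) _
        _ = (ENNReal.ofReal (C * Stmt12Aux.aux1 γ ‖x‖ R) *
              (∑ k ∈ Finset.range (K + 1), ENNReal.ofReal (ck k * 2 ^ (k * n))) *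
                ENNReal.ofReal Vr) * Mg := by
            rw [← Finset.sum_mul, hν]
            ring
        _ ≤ (ENNReal.ofReal (C * Stmt12Aux.aux1 γ ‖x‖ R) * ENNReal.ofReal S *
              ENNReal.ofReal Vr) * Mg := by
            have hsum' : (∑ k ∈ Finset.range (K + 1), ENNReal.ofReal (ck k * 2 ^ (k * n)))
                ≤ ENNReal.ofReal S := by
              rw [← ENNReal.ofReal_sum_of_nonneg
                (fun k _ => mul_nonneg (hck0 k) (by positivity))]
              exact ENNReal.ofReal_le_ofReal hsum
            gcongr
        _ = ENNReal.ofReal (C * Stmt12Aux.aux1 γ ‖x‖ R * S * Vr) * Mg := by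
            rw [← ENNReal.ofReal_mul hCA₁, ← ENNReal.ofReal_mul (mul_nonneg hCA₁ hS0)]
        _ ≤ ENNReal.ofReal (C * Stmt12Aux.aux1 γ ‖x‖ R * S * Vr + 2) * Mg :=
            mul_le_mul_left (ENNReal.ofReal_le_ofReal (by linarith)) _
    · -- OUTER ESTIMATE
      have hT0 : 0 < (β₁ / β₂) * R := by positivity
      have hA₂0 : 0 ≤ Stmt12Aux.aux2 C β₁ β₂ m ‖x‖ R :=
        Stmt12Aux.aux2_nonneg C β₁ β₂ m ‖x‖ R hβ₁ hβ₂
      have hpoint : ∀ y : EuclideanSpace ℝ (Fin n), y ≠ 0 → y ∉ ball x ρ →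
          pH t x y * f y ≤ Stmt12Aux.aux2 C β₁ β₂ m ‖x‖ R * (pH ((β₁ / β₂) * R) x y * f y) := by
        intro y hy0 hyb
        have hd : ρ ≤ ‖x - y‖ := by
          simp only [mem_ball, not_lt] at hyb
          rw [dist_eq_norm] at hyb
          rwa [norm_sub_rev] at hyb
        have h1 := (hbound t ht0 x y hx hy0).2
        have h2 := (hbound ((β₁ / β₂) * R) hT0 x y hx hy0).1
        have hyn : 0 < ‖y‖ := norm_pos_iff.mpr hy0
        have hker := Stmt12Aux.kernel_compare (m := m) (γ := γ)
          hC hβ₂ hβ ht0 htR hρ0 hρsq hmge hxn hyn hd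
        have hepseq : Stmt12Aux.auxEps β₁ ‖x‖ R = ρ ^ 2 / (β₁ * R) := by
          rw [Stmt12Aux.auxEps, hρ]
        have hfin : pH t x y ≤ Stmt12Aux.aux2 C β₁ β₂ m ‖x‖ R * pH ((β₁ / β₂) * R) x y := by
          calc pH t x y
              ≤ C * t ^ (-(n:ℝ)/2) *
                  (min (‖x‖ / Real.sqrt t) 1 * min (‖y‖ / Real.sqrt t) 1) ^ γ *
                  Real.exp (-(‖x - y‖ ^ 2 / (β₁ * t))) := h1
            _ ≤ (C ^ 2 * (β₁ / β₂) ^ m * Real.exp (1 / (4 * β₁)) * (m.factorial : ℝ) *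
                  (max (ρ ^ 2 / (β₁ * R))⁻¹ 0) ^ m) *
                (C⁻¹ * ((β₁ / β₂) * R) ^ (-(n:ℝ)/2) *
                  (min (‖x‖ / Real.sqrt ((β₁ / β₂) * R)) 1 *
                    min (‖y‖ / Real.sqrt ((β₁ / β₂) * R)) 1) ^ γ *
                  Real.exp (-(‖x - y‖ ^ 2 / (β₂ * ((β₁ / β₂) * R))))) := hker
            _ = Stmt12Aux.aux2 C β₁ β₂ m ‖x‖ R *
                (C⁻¹ * ((β₁ / β₂) * R) ^ (-(n:ℝ)/2) *
                  (min (‖x‖ / Real.sqrt ((β₁ / β₂) * R)) 1 *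
                    min (‖y‖ / Real.sqrt ((β₁ / β₂) * R)) 1) ^ γ *
                  Real.exp (-(‖x - y‖ ^ 2 / (β₂ * ((β₁ / β₂) * R))))) := by
                rw [Stmt12Aux.aux2, hepseq]
            _ ≤ Stmt12Aux.aux2 C β₁ β₂ m ‖x‖ R * pH ((β₁ / β₂) * R) x y :=
                mul_le_mul_of_nonneg_left h2 hA₂0
        calc pH t x y * f y
            ≤ (Stmt12Aux.aux2 C β₁ β₂ m ‖x‖ R * pH ((β₁ / β₂) * R) x y) * f y :=
              mul_le_mul_of_nonneg_right hfin (hf0 y)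
          _ = Stmt12Aux.aux2 C β₁ β₂ m ‖x‖ R * (pH ((β₁ / β₂) * R) x y * f y) := by ring
      have hae : ∀ᵐ y ∂(volume.restrict (ball x ρ)ᶜ),
          ENNReal.ofReal (pH t x y * f y) ≤
            ENNReal.ofReal (Stmt12Aux.aux2 C β₁ β₂ m ‖x‖ R) *
              ENNReal.ofReal (pH ((β₁ / β₂) * R) x y * f y) := by
        have h0 : ∀ᵐ y : EuclideanSpace ℝ (Fin n) ∂(volume.restrict (ball x ρ)ᶜ), y ≠ 0 := by
          refine ae_restrict_of_ae ?_
          rw [ae_iff]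
          have hset : {y : EuclideanSpace ℝ (Fin n) | ¬ y ≠ 0} = {0} := by
            ext y
            simp
          rw [hset]
          exact measure_singleton _
        have hmem : ∀ᵐ y ∂(volume.restrict (ball x ρ)ᶜ), y ∈ (ball x ρ)ᶜ :=
          ae_restrict_mem measurableSet_ball.compl
        filter_upwards [h0, hmem] with y h1 h2
        rw [← ENNReal.ofReal_mul hA₂0]
        exact ENNReal.ofReal_le_ofReal (hpoint y h1 h2)
      calc ∫⁻ y in (ball x ρ)ᶜ, ENNReal.ofReal (pH t x y * f y) ∂volume
          ≤ ∫⁻ y in (ball x ρ)ᶜ, ENNReal.ofReal (Stmt12Aux.aux2 C β₁ β₂ m ‖x‖ R) *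
              ENNReal.ofReal (pH ((β₁ / β₂) * R) x y * f y) ∂volume := lintegral_mono_ae hae
        _ ≤ ∫⁻ y, ENNReal.ofReal (Stmt12Aux.aux2 C β₁ β₂ m ‖x‖ R) *
              ENNReal.ofReal (pH ((β₁ / β₂) * R) x y * f y) ∂volume :=
            setLIntegral_le_lintegral _ _
        _ = ENNReal.ofReal (Stmt12Aux.aux2 C β₁ β₂ m ‖x‖ R) *
              ∫⁻ y, ENNReal.ofReal (pH ((β₁ / β₂) * R) x y * f y) ∂volume :=
            lintegral_const_mul' _ _ ENNReal.ofReal_ne_top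
        _ ≤ ENNReal.ofReal (Stmt12Aux.aux2 C β₁ β₂ m ‖x‖ R + 2) *
              ∫⁻ y, ENNReal.ofReal (pH ((β₁ / β₂) * R) x y * f y) ∂volume :=
            mul_le_mul_left (ENNReal.ofReal_le_ofReal (by linarith)) _
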